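/- arXiv:2011.02633 — 2 statements merged into one kernel-verified Lean document; each statement's English description precedes it below -/
import Mathlib

section
/- Every first-countable left ω-narrow strongly topological gyrogroup is separable. -/
universe u v

/-- A gyrogroup: a set with a binary operation `add`, a (unique) two-sided identity `zero`,
(unique) two-sided inverses `neg`, and gyroautomorphisms `gyr x y` satisfying the left
gyroassociative law and the left loop property. -/
class Gyrogroup (G : Type u) where
  add : G → G → G
  zero : G
  neg : G → G
  gyr : G → G → G → G
  zero_add : ∀ a : G, add zero a = a
  add_zero : ∀ a : G, add a zero = a
  zero_unique : ∀ z : G, (∀ a : G, add z a = a ∧ add a z = a) → z = zero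
  neg_add : ∀ a : G, add (neg a) a = zero
  add_neg : ∀ a : G, add a (neg a) = zero
  neg_unique : ∀ x y : G, add y x = zero → add x y = zero → y = neg x
  gyr_bijective : ∀ x y : G, Function.Bijective (gyr x y)
  gyr_add : ∀ x y a b : G, gyr x y (add a b) = add (gyr x y a) (gyr x y b)
  gyr_assoc : ∀ x y z : G, add x (add y z) = add (add x y) (gyr x y z)
  gyr_left_loop : ∀ x y : G, gyr (add x y) y = gyr x y

/-- A topological gyrogroup: a gyrogroup with a Hausdorff topology making the operation
jointly continuous and the inversion continuous. -/
def IsTopologicalGyrogroup (G : Type u) [TopologicalSpace G] [Gyrogroup G] : Prop :=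
  T2Space G ∧ Continuous (fun p : G × G => Gyrogroup.add p.1 p.2) ∧
    Continuous (Gyrogroup.neg : G → G)

/-- A strongly topological gyrogroup: a topological gyrogroup admitting a neighborhood
base `𝒰` at `0` each member of which is invariant under all gyrations. -/
def IsStronglyTopologicalGyrogroup (G : Type u) [TopologicalSpace G] [Gyrogroup G] : Prop :=
  IsTopologicalGyrogroup G ∧
    ∃ 𝒰 : Set (Set G),
      (∀ U ∈ 𝒰, U ∈ nhds (Gyrogroup.zero : G)) ∧
      (∀ V ∈ nhds (Gyrogroup.zero : G), ∃ U ∈ 𝒰, U ⊆ V) ∧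
      (∀ U ∈ 𝒰, ∀ x y : G, Gyrogroup.gyr x y '' U = U)

/-- Left ω-narrow: every open neighborhood `V` of `0` satisfies `G = A ⊕ V`
for some countable `A`. -/
def LeftOmegaNarrow (G : Type u) [TopologicalSpace G] [Gyrogroup G] : Prop :=
  ∀ V : Set G, IsOpen V → (Gyrogroup.zero : G) ∈ V →
    ∃ A : Set G, A.Countable ∧ Set.image2 Gyrogroup.add A V = Set.univ

/-- Right ω-narrow: every open neighborhood `V` of `0` satisfies `G = V ⊕ A`
for some countable `A`. -/
def RightOmegaNarrow (G : Type u) [TopologicalSpace G] [Gyrogroup G] : Prop :=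
  ∀ V : Set G, IsOpen V → (Gyrogroup.zero : G) ∈ V →
    ∃ A : Set G, A.Countable ∧ Set.image2 Gyrogroup.add V A = Set.univ

/-- ω-narrow: both left and right ω-narrow. -/
def OmegaNarrow (G : Type u) [TopologicalSpace G] [Gyrogroup G] : Prop :=
  LeftOmegaNarrow G ∧ RightOmegaNarrow G

/-- A subgyrogroup: a nonempty subset forming a gyrogroup under the inherited operation,
the restriction of each `gyr a b` (for `a b ∈ H`) being an automorphism of `H`. -/
structure IsSubgyrogroup (G : Type u) [Gyrogroup G] (H : Set G) : Prop where
  nonempty : H.Nonempty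
  zero_mem : (Gyrogroup.zero : G) ∈ H
  add_mem : ∀ a ∈ H, ∀ b ∈ H, Gyrogroup.add a b ∈ H
  neg_mem : ∀ a ∈ H, Gyrogroup.neg a ∈ H
  gyr_image : ∀ a ∈ H, ∀ b ∈ H, Gyrogroup.gyr a b '' H = H

/-- An L-subgyrogroup: a subgyrogroup with `gyr a h (H) = H` for all `a ∈ G`, `h ∈ H`. -/
structure IsLSubgyrogroup (G : Type u) [Gyrogroup G] (H : Set G)
    extends IsSubgyrogroup G H : Prop where
  gyr_image_L : ∀ a : G, ∀ h ∈ H, Gyrogroup.gyr a h '' H = H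

/-- The left coset `a ⊕ H`. -/
def lcoset {G : Type u} [Gyrogroup G] (a : G) (H : Set G) : Set G :=
  (fun h => Gyrogroup.add a h) '' H

/-- The equivalence relation identifying points with the same left coset of `H`;
for an L-subgyrogroup the cosets partition `G` and the quotient is the coset space `G/H`,
which carries the quotient topology. -/
def cosetSetoid {G : Type u} [Gyrogroup G] (H : Set G) : Setoid G :=
  ⟨fun a b => lcoset a H = lcoset b H, ⟨fun _ => rfl, Eq.symm, Eq.trans⟩⟩

/-- A topological space is feathered if it contains a nonempty compact subset of
countable character. -/
def Feathered (X : Type u) [TopologicalSpace X] : Prop :=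
  ∃ K : Set X, K.Nonempty ∧ IsCompact K ∧
    ∃ 𝒞 : Set (Set X), 𝒞.Countable ∧
      (∀ U ∈ 𝒞, IsOpen U ∧ K ⊆ U) ∧
      (∀ W : Set X, IsOpen W → K ⊆ W → ∃ U ∈ 𝒞, U ⊆ W)


namespace GyroAux

open Gyrogroup

variable {G : Type u} [Gyrogroup G]

theorem add_left_cancel' {a b c : G} (h : add a b = add a c) : b = c := by
  have h1 : add (neg a) (add a b) = add (neg a) (add a c) := by rw [h]
  rw [gyr_assoc, gyr_assoc, Gyrogroup.neg_add, Gyrogroup.zero_add, Gyrogroup.zero_add] at h1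
  exact (gyr_bijective (neg a) a).1 h1

theorem gyr_zero_left (a b : G) : gyr (zero : G) a b = b := by
  have h := gyr_assoc (zero : G) a b
  rw [Gyrogroup.zero_add, Gyrogroup.zero_add] at h
  exact (add_left_cancel' h).symm

theorem gyr_neg_self (a b : G) : gyr (neg a) a b = b := by
  have h := gyr_left_loop (neg a) a
  rw [Gyrogroup.neg_add] at h
  rw [← h, gyr_zero_left]

theorem neg_add_cancel_left (a b : G) : add (neg a) (add a b) = b := by
  rw [gyr_assoc, Gyrogroup.neg_add, Gyrogroup.zero_add, gyr_neg_self]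

theorem gyr_eq (x v z : G) : gyr x v z = add (neg (add x v)) (add x (add v z)) := by
  rw [gyr_assoc x v z, neg_add_cancel_left]

/-- Solving `a ⊕ v = x` for `a`, explicitly in terms of `x` and `v`. -/
theorem eq_of_add_eq {a v x : G} (h : add a v = x) :
    a = add x (add (neg (add x v)) x) := by
  have h1 := gyr_assoc a v (neg v)
  rw [Gyrogroup.add_neg, Gyrogroup.add_zero, h] at h1
  -- h1 : a = add x (gyr a v (neg v))
  have h2 : gyr a v = gyr x v := by rw [← h, gyr_left_loop]
  rw [h1, h2, gyr_eq, Gyrogroup.add_neg, Gyrogroup.add_zero]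

end GyroAux

/-- Every first-countable left ω-narrow strongly topological gyrogroup is
separable. -/
theorem separable_of_firstCountable_leftOmegaNarrow {G : Type u}
    [TopologicalSpace G] [Gyrogroup G]
    (hG : IsStronglyTopologicalGyrogroup G)
    [FirstCountableTopology G]
    (hnarrow : LeftOmegaNarrow G) :
    TopologicalSpace.SeparableSpace G := by
  classical
  open Gyrogroup in
  obtain ⟨s, hs⟩ := (nhds (zero : G)).exists_antitone_basis
  have cadd : Continuous (fun p : G × G => add p.1 p.2) := hG.1.2.1
  have cneg : Continuous (neg : G → G) := hG.1.2.2
  have hadd : ∀ {f g : G → G}, Continuous f → Continuous g →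
      Continuous (fun v => add (f v) (g v)) := fun hf hg => cadd.comp (hf.prodMk hg)
  -- countable open neighborhood basis at 0
  set V : ℕ → Set G := fun n => interior (s n) with hV
  have hVopen : ∀ n, IsOpen (V n) := fun n => isOpen_interior
  have hVmem : ∀ n, (zero : G) ∈ V n := fun n =>
    mem_interior_iff_mem_nhds.2 (hs.toHasBasis.mem_of_mem trivial)
  -- choose the countable sets
  have hA : ∀ n : ℕ, ∃ A : Set G, A.Countable ∧
      Set.image2 add A (V n) = Set.univ := fun n => hnarrow (V n) (hVopen n) (hVmem n)
  choose A hAcount hAcover using hA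
  refine ⟨⟨⋃ n, A n, Set.countable_iUnion hAcount, ?_⟩⟩
  rw [dense_iff_inter_open]
  rintro U hUopen ⟨x, hxU⟩
  -- the continuous solution map
  set F : G → G := fun v => add x (add (neg (add x v)) x) with hF
  have hFcont : Continuous F := by
    apply hadd continuous_const
    exact hadd ((cneg.comp (hadd continuous_const continuous_id))) continuous_const
  have hF0 : F zero = x := by
    simp only [hF, Gyrogroup.add_zero, Gyrogroup.neg_add]
  have hpre : F ⁻¹' U ∈ nhds (zero : G) := by
    have : (zero : G) ∈ F ⁻¹' U := by simpa [hF0] using hxU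
    exact (hUopen.preimage hFcont).mem_nhds this
  obtain ⟨n, -, hn⟩ := hs.toHasBasis.mem_iff.1 hpre
  -- find a ∈ A n with a ⊕ v = x
  have hx : x ∈ Set.image2 add (A n) (V n) := by rw [hAcover n]; trivial
  obtain ⟨a, ha, v, hv, hav⟩ := hx
  have haF : a = F v := GyroAux.eq_of_add_eq hav
  have haU : a ∈ U := by
    rw [haF]
    exact hn (interior_subset hv)
  exact ⟨a, haU, Set.mem_iUnion.2 ⟨n, ha⟩⟩
end

section
/- Every first-countable left ω-narrow strongly topological gyrogroup is Lindelöf. -/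
universe u v

section Aux
variable {G : Type u} [Gyrogroup G]
open Gyrogroup

theorem Gyr.left_inj (a : G) : Function.Injective (add a) := by
  intro b c h
  have hb : add (neg a) (add a b) = gyr (neg a) a b := by
    rw [Gyrogroup.gyr_assoc, Gyrogroup.neg_add, Gyrogroup.zero_add]
  have hc : add (neg a) (add a c) = gyr (neg a) a c := by
    rw [Gyrogroup.gyr_assoc, Gyrogroup.neg_add, Gyrogroup.zero_add]
  exact (gyr_bijective (neg a) a).injective (by rw [← hb, ← hc, h])

theorem Gyr.gyr_zero (x y : G) : gyr x y zero = zero := by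
  have h := Gyrogroup.gyr_add x y zero zero
  rw [Gyrogroup.zero_add] at h
  exact ((Gyr.left_inj (gyr x y zero)) (by rw [Gyrogroup.add_zero]; exact h.symm))

theorem Gyr.gyr_zero_left (y z : G) : gyr zero y z = z := by
  have h := Gyrogroup.gyr_assoc zero y z
  rw [Gyrogroup.zero_add, Gyrogroup.zero_add] at h
  exact ((Gyr.left_inj y) h).symm

theorem Gyr.gyr_neg_self (y z : G) : gyr (neg y) y z = z := by
  have h := Gyrogroup.gyr_left_loop (neg y) y
  rw [Gyrogroup.neg_add] at h
  rw [← h, Gyr.gyr_zero_left]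

theorem Gyr.left_cancel (a b : G) : add (neg a) (add a b) = b := by
  rw [Gyrogroup.gyr_assoc, Gyrogroup.neg_add, Gyrogroup.zero_add, Gyr.gyr_neg_self]

theorem Gyr.gyr_neg (x y a : G) : gyr x y (neg a) = neg (gyr x y a) := by
  apply Gyrogroup.neg_unique
  · rw [← Gyrogroup.gyr_add, Gyrogroup.neg_add, Gyr.gyr_zero]
  · rw [← Gyrogroup.gyr_add, Gyrogroup.add_neg, Gyr.gyr_zero]

theorem Gyr.neg_zero : (neg (zero : G)) = zero :=
  (Gyrogroup.neg_unique zero zero (Gyrogroup.zero_add zero) (Gyrogroup.zero_add zero)).symm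

theorem Gyr.recover (a v : G) : add (add a v) (neg (gyr a v v)) = a := by
  rw [← Gyr.gyr_neg, ← Gyrogroup.gyr_assoc, Gyrogroup.add_neg, Gyrogroup.add_zero]

end Aux


/-- Every first-countable left ω-narrow strongly topological gyrogroup is
Lindelöf. -/
theorem lindelof_of_firstCountable_leftOmegaNarrow {G : Type u}
    [TopologicalSpace G] [Gyrogroup G]
    (hG : IsStronglyTopologicalGyrogroup G)
    [FirstCountableTopology G]
    (hnarrow : LeftOmegaNarrow G) :
    LindelofSpace G := by
  classical
  obtain ⟨⟨_, hadd, hneg⟩, 𝒰, hmemnhds, hbase, hgyr⟩ := hG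
  constructor
  apply isLindelof_of_countable_subcover
  intro ι C hCopen hcov
  obtain ⟨B, hB⟩ := (nhds (Gyrogroup.zero : G)).exists_antitone_basis
  choose Uu hU𝒰 hUB using fun n => hbase (B n) (hB.mem n)
  have hUnhds : ∀ n, Uu n ∈ nhds (Gyrogroup.zero : G) := fun n => hmemnhds _ (hU𝒰 n)
  have hVopen : ∀ n, IsOpen (interior (Uu n)) := fun n => isOpen_interior
  have hV0 : ∀ n, (Gyrogroup.zero : G) ∈ interior (Uu n) :=
    fun n => mem_interior_iff_mem_nhds.2 (hUnhds n)
  choose A hAcount hAcov using fun n => hnarrow (interior (Uu n)) (hVopen n) (hV0 n)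
  have h0 : (Gyrogroup.zero : G) ∈ ⋃ i, C i := hcov (Set.mem_univ _)
  obtain ⟨i0, hi0⟩ := Set.mem_iUnion.1 h0
  let g : ℕ → G → ι := fun n a =>
    if h : ∃ j : ι, ∀ w ∈ Uu n, Gyrogroup.add a w ∈ C j then h.choose else i0
  refine ⟨⋃ n, g n '' A n, Set.countable_iUnion (fun n => (hAcount n).image _), ?_⟩
  intro x _
  obtain ⟨i, hxi⟩ := Set.mem_iUnion.1 (hcov (Set.mem_univ x))
  have hc : Continuous fun z : G => Gyrogroup.add x z :=
    hadd.comp (continuous_const.prodMk continuous_id)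
  have hW : (fun z : G => Gyrogroup.add x z) ⁻¹' (C i) ∈ nhds (Gyrogroup.zero : G) := by
    apply hc.continuousAt.preimage_mem_nhds
    rw [Gyrogroup.add_zero]
    exact (hCopen i).mem_nhds hxi
  have hf : Continuous fun p : G × G => Gyrogroup.add (Gyrogroup.neg p.1) p.2 :=
    hadd.comp ((hneg.comp continuous_fst).prodMk continuous_snd)
  have hpre : (fun p : G × G => Gyrogroup.add (Gyrogroup.neg p.1) p.2) ⁻¹'
      ((fun z : G => Gyrogroup.add x z) ⁻¹' (C i)) ∈
      nhds ((Gyrogroup.zero : G), (Gyrogroup.zero : G)) := by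
    apply hf.continuousAt.preimage_mem_nhds
    have hf0 : Gyrogroup.add (Gyrogroup.neg (Gyrogroup.zero : G)) (Gyrogroup.zero : G)
        = (Gyrogroup.zero : G) := by
      rw [Gyr.neg_zero, Gyrogroup.zero_add]
    simpa [hf0] using hW
  obtain ⟨P, hP, Q, hQ, hPQ⟩ := mem_nhds_prod_iff.1 hpre
  obtain ⟨n, -, hBn⟩ := hB.1.mem_iff.1 (Filter.inter_mem hP hQ)
  have hkey : ∀ u' ∈ Uu n, ∀ w ∈ Uu n,
      Gyrogroup.add x (Gyrogroup.add (Gyrogroup.neg u') w) ∈ C i := by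
    intro u' hu' w hw
    have hm : (u', w) ∈ P ×ˢ Q :=
      ⟨(hBn (hUB n hu')).1, (hBn (hUB n hw)).2⟩
    exact hPQ hm
  have hx : x ∈ Set.image2 Gyrogroup.add (A n) (interior (Uu n)) :=
    (hAcov n) ▸ Set.mem_univ x
  obtain ⟨a, ha, v, hv, hav⟩ := hx
  have hvU : v ∈ Uu n := interior_subset hv
  have hmain : ∀ w ∈ Uu n, Gyrogroup.add a w ∈ C i := by
    intro w hw
    have hu : Gyrogroup.gyr a v v ∈ Uu n :=
      (hgyr _ (hU𝒰 n) a v) ▸ Set.mem_image_of_mem _ hvU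
    have hax : Gyrogroup.add x (Gyrogroup.neg (Gyrogroup.gyr a v v)) = a := by
      rw [← hav]; exact Gyr.recover a v
    have hwim : w ∈ Gyrogroup.gyr x (Gyrogroup.neg (Gyrogroup.gyr a v v)) '' Uu n := by
      rw [hgyr _ (hU𝒰 n)]; exact hw
    obtain ⟨z, hz, hzw⟩ := hwim
    have heq : Gyrogroup.add x (Gyrogroup.add (Gyrogroup.neg (Gyrogroup.gyr a v v)) z)
        = Gyrogroup.add a w := by
      rw [Gyrogroup.gyr_assoc, hax, hzw]
    rw [← heq]
    exact hkey _ hu z hz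
  have hgdef : ∃ j : ι, ∀ w ∈ Uu n, Gyrogroup.add a w ∈ C j := ⟨i, hmain⟩
  have hspec : ∀ w ∈ Uu n, Gyrogroup.add a w ∈ C (g n a) := by
    simp only [g]
    rw [dif_pos hgdef]
    exact hgdef.choose_spec
  exact Set.mem_biUnion (Set.mem_iUnion.2 ⟨n, Set.mem_image_of_mem _ ha⟩)
    (hav ▸ hspec v hvU)
end
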